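/- arXiv:0712.0622 — 5 statements merged into one kernel-verified Lean document; each statement's English description precedes it below -/
import Mathlib

section
/- Let (Ω,F,(F_t)_{t≥0},P) be a filtered probability space, Z an F-measurable real random variable, and for each t ≥ 0 let Q_t(ω,dx) be a regular conditional distribution of Z given F_t. If for each t ≥ 0 there exists a positive σ-finite measure η_t on (ℝ,B(ℝ)) with Q_t(ω,·) ≪ η_t for P-almost every ω, then for each t ≥ 0 one also has Q_t(ω,·) ≪ η for P-almost every ω, where η is the law (distribution) of Z. In other words, in Jacod's criterion the dominating measure can always be taken to be the distribution of Z, independently of t. -/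
/-!
Let `ν` be the law of `Z` and let `N` carry the part of `η` that is singular to `ν`, so that
`ν Nᶜ = 0` and `η` restricted to `N` is absolutely continuous with respect to `ν`. Since
`Q_t(·, Nᶜ)` is a version of `P(Z ∈ Nᶜ | 𝓕_t) = 0`, almost every `Q_t(ω, ·)` is concentrated on
`N`, where it is dominated by `η|_N ≪ ν`.
-/

open MeasureTheory Filter Set ProbabilityTheory
open scoped NNReal ENNReal

noncomputable section

namespace Enlargement

variable {Ω : Type*} {m : MeasurableSpace Ω}

/-- A path `f : ℝ≥0 → ℝ` is càdlàg: right-continuous with left limits. -/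
def IsCadlag (f : ℝ≥0 → ℝ) : Prop :=
  (∀ t : ℝ≥0, Tendsto f (nhdsWithin t (Set.Ici t)) (nhds (f t))) ∧
  (∀ t : ℝ≥0, 0 < t → ∃ l : ℝ, Tendsto f (nhdsWithin t (Set.Iio t)) (nhds l))

/-- `M` is a local martingale w.r.t. the filtration `𝓕` under `μ`: it is adapted and there is
an increasing sequence of stopping times `τ n → ∞` a.s. localizing `M` to martingales. -/
def IsLocalMartingale (𝓕 : Filtration ℝ≥0 m) (μ : Measure Ω) (M : ℝ≥0 → Ω → ℝ) : Prop :=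
  Adapted 𝓕 M ∧
  ∃ τ : ℕ → Ω → ℝ≥0,
    (∀ n, IsStoppingTime 𝓕 (fun ω => ((τ n ω : ℝ≥0) : WithTop ℝ≥0))) ∧
    (∀ n ω, τ n ω ≤ τ (n + 1) ω) ∧
    (∀ᵐ ω ∂μ, Tendsto (fun n => τ n ω) atTop atTop) ∧
    (∀ n, Martingale (fun t ω => M (min t (τ n ω)) ω) 𝓕 μ)

/-- `X` is a semimartingale w.r.t. `𝓕` under `μ`: adapted, a.s. càdlàg, and
`X = X₀ + M + A` with `M` a càdlàg local martingale started at `0` and `A` a càdlàg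
adapted process of finite variation on compact intervals started at `0`. -/
def IsSemimartingale (𝓕 : Filtration ℝ≥0 m) (μ : Measure Ω) (X : ℝ≥0 → Ω → ℝ) : Prop :=
  Adapted 𝓕 X ∧ (∀ᵐ ω ∂μ, IsCadlag fun t => X t ω) ∧
  ∃ M A : ℝ≥0 → Ω → ℝ,
    IsLocalMartingale 𝓕 μ M ∧ (∀ ω, M 0 ω = 0) ∧ (∀ᵐ ω ∂μ, IsCadlag fun t => M t ω) ∧
    Adapted 𝓕 A ∧ (∀ ω, A 0 ω = 0) ∧ (∀ᵐ ω ∂μ, IsCadlag fun t => A t ω) ∧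
    (∀ᵐ ω ∂μ, ∀ t : ℝ≥0, BoundedVariationOn (fun s => A s ω) (Set.Icc 0 t)) ∧
    (∀ t ω, X t ω = X 0 ω + M t ω + A t ω)

/-- The filtration `𝓕` satisfies the usual hypotheses under `μ`: it is complete
(`𝓕 0` contains all `μ`-null sets) and right-continuous. -/
def UsualConditions (𝓕 : Filtration ℝ≥0 m) (μ : Measure Ω) : Prop :=
  (∀ s : Set Ω, μ s = 0 → MeasurableSet[𝓕 0] s) ∧
  (∀ t : ℝ≥0, (𝓕 t : MeasurableSpace Ω) = ⨅ (u : ℝ≥0) (_ : t < u), (𝓕 u : MeasurableSpace Ω))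

/-- `𝓖` is the initial enlargement of `𝓕` by the random variable `Z`:
`𝓖 t = ⋂_{ε>0} (𝓕 (t+ε) ⊔ σ(Z))`. -/
def InitEnlargement (𝓕 : Filtration ℝ≥0 m) (Z : Ω → ℝ) (𝓖 : Filtration ℝ≥0 m) : Prop :=
  ∀ t : ℝ≥0, (𝓖 t : MeasurableSpace Ω) =
    ⨅ (ε : ℝ≥0) (_ : 0 < ε),
      ((𝓕 (t + ε) : MeasurableSpace Ω) ⊔ MeasurableSpace.comap Z inferInstance)

/-- `𝓖` is the progressive enlargement of `𝓕` by the random time `ρ`: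
`𝓖 t = ⋂_{ε>0} (𝓕 (t+ε) ⊔ σ(ρ ∧ (t+ε)))`; it is the smallest filtration satisfying the
usual hypotheses containing `𝓕` and making `ρ` a stopping time. -/
def ProgEnlargement (𝓕 : Filtration ℝ≥0 m) (ρ : Ω → ℝ≥0∞) (𝓖 : Filtration ℝ≥0 m) : Prop :=
  ∀ t : ℝ≥0, (𝓖 t : MeasurableSpace Ω) =
    ⨅ (ε : ℝ≥0) (_ : 0 < ε),
      ((𝓕 (t + ε) : MeasurableSpace Ω) ⊔
        MeasurableSpace.comap (fun ω => min (ρ ω) ((t + ε : ℝ≥0) : ℝ≥0∞)) inferInstance)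

/-- `Q` is a regular conditional distribution of `Z` given `𝓕 t` for each `t`: a Markov
kernel, `𝓕 t`-measurable in `ω`, such that `Q t · B` is a version of `P(Z ∈ B | 𝓕 t)`. -/
def IsRegCondDist (𝓕 : Filtration ℝ≥0 m) (μ : Measure Ω) (Z : Ω → ℝ)
    (Q : ℝ≥0 → Ω → Measure ℝ) : Prop :=
  ∀ t : ℝ≥0,
    (∀ ω, IsProbabilityMeasure (Q t ω)) ∧
    (∀ B : Set ℝ, MeasurableSet B → Measurable[𝓕 t] fun ω => (Q t ω B).toReal) ∧
    (∀ B : Set ℝ, MeasurableSet B →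
      (fun ω => (Q t ω B).toReal) =ᵐ[μ] μ[(Z ⁻¹' B).indicator (fun _ => (1 : ℝ)) | 𝓕 t])

theorem restrict_absolutelyContinuous_of_singularPart_eq_zero {α : Type*}
    {_ : MeasurableSpace α} {η ν : Measure α} [η.HaveLebesgueDecomposition ν] {s : Set α}
    (hs : η.singularPart ν s = 0) :
    η.restrict s ≪ ν := by
  rw [← η.singularPart_add_rnDeriv ν, Measure.restrict_add, Measure.restrict_eq_zero.2 hs,
    zero_add]
  exact (Measure.absolutelyContinuous_of_le Measure.restrict_le_self).trans
    (withDensity_absolutelyContinuous ν _)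

theorem absolutelyContinuous_restrict_of_measure_compl_eq_zero {α : Type*}
    {_ : MeasurableSpace α} {κ η : Measure α} {s : Set α} (hκη : κ ≪ η) (hs : κ sᶜ = 0) :
    κ ≪ η.restrict s := by
  rw [← Measure.restrict_eq_self_of_ae_mem (mem_ae_iff.2 hs)]
  exact hκη.restrict s

theorem ae_measure_eq_zero_of_toReal_ae_eq_condExp {α : Type*} {_ : MeasurableSpace α}
    {m' m₀ : MeasurableSpace Ω} {μ : Measure Ω} {κ : Ω → Measure α} [∀ ω, IsFiniteMeasure (κ ω)]
    {B : Set α} {A : Set Ω} (hA : μ A = 0)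
    (hκ : (fun ω => (κ ω B).toReal) =ᵐ[μ] μ[A.indicator (fun _ => (1 : ℝ)) | m']) :
    ∀ᵐ ω ∂μ, κ ω B = 0 := by
  have hzero : μ[A.indicator (fun _ => (1 : ℝ)) | m'] =ᵐ[μ] 0 := by
    simpa only [condExp_zero] using
      condExp_congr_ae (m := m') (indicator_meas_zero (f := fun _ => (1 : ℝ)) hA)
  filter_upwards [hκ.trans hzero] with ω hω
  exact (ENNReal.toReal_eq_zero_iff _).1 hω |>.resolve_right (measure_ne_top _ _)

/-- In Jacod's criterion, the dominating measure can be taken to be the law of `Z`: if for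
each `t` there is a σ-finite measure `η t` with `Q t ω ≪ η t` for a.e. `ω`, then for each
`t` one also has `Q t ω ≪ law(Z)` for a.e. `ω`, where `law(Z) = Measure.map Z μ`. -/
theorem jacod_dominating_measure_law {μ : Measure Ω} [IsProbabilityMeasure μ]
    (𝓕 : Filtration ℝ≥0 m)
    (Z : Ω → ℝ) (hZ : Measurable Z)
    (Q : ℝ≥0 → Ω → Measure ℝ) (hQ : IsRegCondDist 𝓕 μ Z Q)
    (hdom : ∀ t : ℝ≥0, ∃ η : Measure ℝ, SigmaFinite η ∧ ∀ᵐ ω ∂μ, Q t ω ≪ η) :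
    ∀ t : ℝ≥0, ∀ᵐ ω ∂μ, Q t ω ≪ Measure.map Z μ := by
  intro t
  obtain ⟨η, hη, hQη⟩ := hdom t
  obtain ⟨hprob, -, hversion⟩ := hQ t
  have : IsProbabilityMeasure (μ.map Z) := Measure.isProbabilityMeasure_map hZ.aemeasurable
  have hsing := η.mutuallySingular_singularPart (μ.map Z)
  have hN := hsing.measurableSet_nullSet
  have hZN : μ (Z ⁻¹' hsing.nullSetᶜ) = 0 := by
    rw [← Measure.map_apply hZ hN.compl]
    exact hsing.measure_compl_nullSet
  filter_upwards [hQη, ae_measure_eq_zero_of_toReal_ae_eq_condExp hZN (hversion _ hN.compl)]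
    with ω hωη hωN
  exact (absolutelyContinuous_restrict_of_measure_compl_eq_zero hωη hωN).trans
    (restrict_absolutelyContinuous_of_singularPart_eq_zero hsing.measure_nullSet)

end Enlargement
end
end

section
/- Brémaud–Yor characterization of the (H) hypothesis: Let (Ω,F,P) be a probability space with two filtrations (F_t)_{t≥0} and (G_t)_{t≥0} satisfying the usual assumptions and F_t ⊆ G_t for all t. The following are equivalent: (1) every (F_t)-martingale is a (G_t)-martingale; (2) for every t ≥ 0, the σ-algebras G_t and F_∞ = σ(∪_s F_s) are conditionally independent given F_t. -/
/-!
Both conditions are equivalent to: for every `t` and every integrable `𝓕_∞`-measurable `f`,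
`E[f | 𝓖 t] = E[f | 𝓕 t]`. Under (H), `s ↦ E[f | 𝓕 s]` is a `𝓖`-martingale, so
`E[E[f | 𝓕 n] | 𝓖 t] = E[f | 𝓕 t]` for `n ≥ t`, and `E[f | 𝓕 n] → f` in `L¹` by Lévy's upward
theorem. Under conditional independence, for bounded `f` and `A ∈ 𝓖 t`,
`∫_A E[f | 𝓕 t] = ∫ E[1_A | 𝓕 t] E[f | 𝓕 t] = ∫ E[1_A f | 𝓕 t] = ∫_A f`, and truncation removes
boundedness. Conversely the equality gives
`E[XY | 𝓕 t] = E[X E[Y | 𝓖 t] | 𝓕 t] = E[X E[Y | 𝓕 t] | 𝓕 t] = E[X | 𝓕 t] E[Y | 𝓕 t]`.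
Both limit passages only use that conditional expectations are `L¹`-contractions.
-/

open MeasureTheory Filter Set ProbabilityTheory
open scoped NNReal ENNReal

noncomputable section

namespace Enlargement

variable {Ω : Type*} {m : MeasurableSpace Ω}

/-- The σ-algebras `mA` and `mB` are conditionally independent given `mC` (under `μ`):
for all bounded `mA`-measurable `X` and bounded `mB`-measurable `Y`,
`E[XY | mC] = E[X | mC] · E[Y | mC]` a.s. -/
def CondIndepSigma (mA mB mC : MeasurableSpace Ω) (μ : @Measure Ω m) : Prop :=
  ∀ X Y : Ω → ℝ, StronglyMeasurable[mA] X → StronglyMeasurable[mB] Y →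
    (∃ C : ℝ, ∀ ω, |X ω| ≤ C) → (∃ C : ℝ, ∀ ω, |Y ω| ≤ C) →
    μ[fun ω => X ω * Y ω | mC] =ᵐ[μ] fun ω => (μ[X | mC]) ω * (μ[Y | mC]) ω

end Enlargement

open scoped Topology

namespace MeasureTheory

variable {Ω : Type*} {m : MeasurableSpace Ω}

def Filtration.reindex {ι κ : Type*} [Preorder ι] [Preorder κ] (𝓕 : Filtration κ m)
    (φ : ι → κ) (hφ : Monotone φ) : Filtration ι m where
  seq i := 𝓕 (φ i)
  mono' _ _ hij := 𝓕.mono (hφ hij)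
  le' i := 𝓕.le (φ i)

theorem Filtration.iSup_reindex {ι κ : Type*} [Preorder ι] [Preorder κ] (𝓕 : Filtration κ m)
    {φ : ι → κ} (hφ : Monotone φ) (hcofinal : ∀ k, ∃ i, k ≤ φ i) :
    ⨆ i, 𝓕.reindex φ hφ i = ⨆ k, 𝓕 k :=
  le_antisymm (iSup_le fun i => le_iSup (fun k => 𝓕 k) (φ i)) <| iSup_le fun k =>
    let ⟨i, hki⟩ := hcofinal k
    (𝓕.mono hki).trans (le_iSup (fun i => 𝓕.reindex φ hφ i) i)

theorem condExp_ae_eq_of_tendsto_eLpNorm {μ : Measure Ω} {m₁ m₂ : MeasurableSpace Ω}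
    {f : Ω → ℝ} {g : ℕ → Ω → ℝ} (hf : Integrable f μ) (hg : ∀ n, Integrable (g n) μ)
    (hgf : Tendsto (fun n => eLpNorm (g n - f) 1 μ) atTop (𝓝 0))
    (heq : ∀ᶠ n in atTop, μ[g n | m₁] =ᵐ[μ] μ[g n | m₂]) :
    μ[f | m₁] =ᵐ[μ] μ[f | m₂] := by
  have hbound : ∀ᶠ n in atTop, eLpNorm (μ[f | m₁] - μ[f | m₂]) 1 μ ≤
      eLpNorm (f - g n) 1 μ + eLpNorm (g n - f) 1 μ := by
    filter_upwards [heq] with n hn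
    have hsplit : μ[f | m₁] - μ[f | m₂] =ᵐ[μ] μ[f - g n | m₁] + μ[g n - f | m₂] := by
      filter_upwards [condExp_sub hf (hg n) m₁, condExp_sub (hg n) hf m₂, hn] with ω h₁ h₂ h
      simp only [Pi.add_apply, Pi.sub_apply] at h₁ h₂ ⊢
      rw [h₁, h₂, h]
      ring
    calc eLpNorm (μ[f | m₁] - μ[f | m₂]) 1 μ
        = eLpNorm (μ[f - g n | m₁] + μ[g n - f | m₂]) 1 μ := eLpNorm_congr_ae hsplit
      _ ≤ eLpNorm (μ[f - g n | m₁]) 1 μ + eLpNorm (μ[g n - f | m₂]) 1 μ :=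
        eLpNorm_add_le integrable_condExp.aestronglyMeasurable
          integrable_condExp.aestronglyMeasurable le_rfl
      _ ≤ _ := add_le_add (eLpNorm_condExp_le_eLpNorm _ le_rfl)
        (eLpNorm_condExp_le_eLpNorm _ le_rfl)
  have hlim : Tendsto (fun n => eLpNorm (f - g n) 1 μ + eLpNorm (g n - f) 1 μ) atTop (𝓝 0) := by
    simp_rw [eLpNorm_sub_comm f]
    simpa using hgf.add hgf
  have hzero : μ[f | m₁] - μ[f | m₂] =ᵐ[μ] 0 :=
    (eLpNorm_eq_zero_iff (integrable_condExp.sub integrable_condExp).aestronglyMeasurable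
      one_ne_zero).1 (le_antisymm (ge_of_tendsto hlim hbound) bot_le)
  filter_upwards [hzero] with ω h
  exact sub_eq_zero.1 h

theorem tendsto_eLpNorm_truncation_sub {μ : Measure Ω} {f : Ω → ℝ} (hf : Integrable f μ) :
    Tendsto (fun n : ℕ => eLpNorm (truncation f n - f) 1 μ) atTop (𝓝 0) := by
  simp_rw [eLpNorm_one_eq_lintegral_enorm, Pi.sub_apply, ← ofReal_norm]
  refine tendsto_lintegral_norm_of_dominated_convergence
    (fun _ => hf.aestronglyMeasurable.truncation) hf.norm.hasFiniteIntegral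
    (fun n => ae_of_all _ fun ω => abs_truncation_le_abs_self f n ω) (ae_of_all _ fun ω => ?_)
  refine tendsto_const_nhds.congr' ?_
  filter_upwards [tendsto_natCast_atTop_atTop.eventually_gt_atTop |f ω|] with n hn
  exact (truncation_eq_self hn).symm

end MeasureTheory

namespace Enlargement

variable {Ω : Type*} {m : MeasurableSpace Ω}

section CondIndep

variable {μ : Measure Ω} [IsFiniteMeasure μ] {mF mG mB : MeasurableSpace Ω}

theorem condIndepSigma_of_condExp_ae_eq (hFG : mF ≤ mG) (hG : mG ≤ m) (hB : mB ≤ m)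
    (h : ∀ Y : Ω → ℝ, StronglyMeasurable[mB] Y → Integrable Y μ → μ[Y | mG] =ᵐ[μ] μ[Y | mF]) :
    CondIndepSigma mG mB mF μ := by
  rintro X Y hX hY ⟨CX, hCX⟩ ⟨CY, hCY⟩
  have hXi : Integrable X μ :=
    .of_bound (hX.mono hG).aestronglyMeasurable CX (ae_of_all _ hCX)
  have hYi : Integrable Y μ :=
    .of_bound (hY.mono hB).aestronglyMeasurable CY (ae_of_all _ hCY)
  have hXYi : Integrable (X * μ[Y | mF]) μ :=
    integrable_condExp.bdd_mul (hX.mono hG).aestronglyMeasurable (ae_of_all _ hCX)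
  calc μ[X * Y | mF]
      =ᵐ[μ] μ[μ[X * Y | mG] | mF] := (condExp_condExp_of_le hFG hG).symm
    _ =ᵐ[μ] μ[X * μ[Y | mF] | mF] := condExp_congr_ae <|
        (condExp_stronglyMeasurable_mul_of_bound hG hX hYi CX (ae_of_all _ hCX)).trans
          (h Y hY hYi).mul_left
    _ =ᵐ[μ] μ[X | mF] * μ[Y | mF] :=
        condExp_mul_of_stronglyMeasurable_right stronglyMeasurable_condExp hXYi hXi

theorem condExp_ae_eq_of_condIndepSigma_of_bounded (hFG : mF ≤ mG) (hG : mG ≤ m)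
    (hB : mB ≤ m) (hci : CondIndepSigma mG mB mF μ) {Y : Ω → ℝ} (hY : StronglyMeasurable[mB] Y)
    (hYb : ∃ C, ∀ ω, |Y ω| ≤ C) : μ[Y | mG] =ᵐ[μ] μ[Y | mF] := by
  obtain ⟨C, hC⟩ := hYb
  have hYi : Integrable Y μ := .of_bound (hY.mono hB).aestronglyMeasurable C (ae_of_all _ hC)
  refine (ae_eq_condExp_of_forall_setIntegral_eq hG hYi
    (fun _ _ _ => integrable_condExp.integrableOn) (fun A hA _ => ?_)
    (stronglyMeasurable_condExp.mono hFG).aestronglyMeasurable).symm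
  set X := A.indicator (1 : Ω → ℝ)
  have hX : StronglyMeasurable[mG] X := stronglyMeasurable_one.indicator hA
  have hXb : ∀ ω, |X ω| ≤ 1 := fun ω => by
    by_cases hω : ω ∈ A <;> simp [X, hω]
  have hXi : Integrable X μ := .of_bound (hX.mono hG).aestronglyMeasurable 1 (ae_of_all _ hXb)
  have hXYi : Integrable (X * μ[Y | mF]) μ :=
    integrable_condExp.bdd_mul (hX.mono hG).aestronglyMeasurable (ae_of_all _ hXb)
  have hX_mul (g : Ω → ℝ) : ∫ ω, (X * g) ω ∂μ = ∫ ω in A, g ω ∂μ := by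
    rw [← integral_indicator (hG _ hA)]
    congr 1 with ω
    by_cases hω : ω ∈ A <;> simp [X, hω]
  calc ∫ ω in A, μ[Y | mF] ω ∂μ
      = ∫ ω, μ[X * μ[Y | mF] | mF] ω ∂μ := by rw [integral_condExp (hFG.trans hG), hX_mul]
    _ = ∫ ω, μ[X * Y | mF] ω ∂μ := integral_congr_ae <|
        (condExp_mul_of_stronglyMeasurable_right stronglyMeasurable_condExp hXYi hXi).trans
          (hci X Y hX hY ⟨1, hXb⟩ ⟨C, hC⟩).symm
    _ = ∫ ω in A, Y ω ∂μ := by rw [integral_condExp (hFG.trans hG), hX_mul]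

theorem condExp_ae_eq_of_condIndepSigma (hFG : mF ≤ mG) (hG : mG ≤ m) (hB : mB ≤ m)
    (hci : CondIndepSigma mG mB mF μ) {f : Ω → ℝ} (hf : Integrable f μ)
    (hfm : StronglyMeasurable[mB] f) : μ[f | mG] =ᵐ[μ] μ[f | mF] :=
  condExp_ae_eq_of_tendsto_eLpNorm hf (fun _ => hf.aestronglyMeasurable.integrable_truncation)
    (tendsto_eLpNorm_truncation_sub hf) <| .of_forall fun n =>
      condExp_ae_eq_of_condIndepSigma_of_bounded hFG hG hB hci
        ((stronglyMeasurable_id.indicator measurableSet_Ioc).comp_measurable hfm.measurable)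
        ⟨_, abs_truncation_le_bound f n⟩

end CondIndep

section Immersion

variable {μ : Measure Ω} {𝓕 𝓖 : Filtration ℝ≥0 m}

theorem condExp_ae_eq_of_forall_martingale [IsFiniteMeasure μ]
    (hH : ∀ M : ℝ≥0 → Ω → ℝ, Martingale M 𝓕 μ → Martingale M 𝓖 μ) (t : ℝ≥0) {f : Ω → ℝ}
    (hf : Integrable f μ) (hfm : StronglyMeasurable[⨆ s, (𝓕 s : MeasurableSpace Ω)] f) :
    μ[f | 𝓖 t] =ᵐ[μ] μ[f | 𝓕 t] := by
  have hfm' : StronglyMeasurable[⨆ n, 𝓕.reindex ((↑) : ℕ → ℝ≥0) Nat.mono_cast n] f := by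
    rwa [Filtration.iSup_reindex _ _ fun s => ⟨⌈s⌉₊, Nat.le_ceil s⟩]
  have hM : Martingale (fun s => μ[f | 𝓕 s]) 𝓕 μ := martingale_condExp f 𝓕 μ
  refine condExp_ae_eq_of_tendsto_eLpNorm hf (fun _ => integrable_condExp)
    (hf.tendsto_eLpNorm_condExp hfm') ?_
  filter_upwards [eventually_ge_atTop ⌈t⌉₊] with n hn
  have htn : t ≤ n := (Nat.le_ceil t).trans (by exact_mod_cast hn)
  exact ((hH _ hM).condExp_ae_eq htn).trans (hM.condExp_ae_eq htn).symm

theorem martingale_of_condExp_ae_eq (hle : ∀ t, (𝓕 t : MeasurableSpace Ω) ≤ 𝓖 t)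
    (h : ∀ t (f : Ω → ℝ), Integrable f μ → StronglyMeasurable[⨆ s, (𝓕 s : MeasurableSpace Ω)] f →
      μ[f | 𝓖 t] =ᵐ[μ] μ[f | 𝓕 t])
    {M : ℝ≥0 → Ω → ℝ} (hM : Martingale M 𝓕 μ) : Martingale M 𝓖 μ :=
  ⟨fun t => (hM.stronglyAdapted t).mono (hle t), fun s t hst =>
    (h s _ (hM.integrable t) ((hM.stronglyAdapted t).mono (le_iSup (fun u => 𝓕 u) t))).trans
      (hM.condExp_ae_eq hst)⟩

end Immersion

theorem bremaud_yor_general {μ : Measure Ω} [IsProbabilityMeasure μ]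
    (𝓕 𝓖 : Filtration ℝ≥0 m)
    (hle : ∀ t : ℝ≥0, (𝓕 t : MeasurableSpace Ω) ≤ 𝓖 t) :
    (∀ M : ℝ≥0 → Ω → ℝ, Martingale M 𝓕 μ → Martingale M 𝓖 μ) ↔
      (∀ t : ℝ≥0,
        CondIndepSigma (𝓖 t) (⨆ s : ℝ≥0, (𝓕 s : MeasurableSpace Ω)) (𝓕 t) μ) := by
  have h𝓕le : (⨆ s : ℝ≥0, (𝓕 s : MeasurableSpace Ω)) ≤ m := iSup_le 𝓕.le
  constructor
  · intro hH t
    exact condIndepSigma_of_condExp_ae_eq (hle t) (𝓖.le t) h𝓕le fun Y hY hYi =>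
      condExp_ae_eq_of_forall_martingale hH t hYi hY
  · intro hci M
    exact martingale_of_condExp_ae_eq hle fun t f hf hfm =>
      condExp_ae_eq_of_condIndepSigma (hle t) (𝓖.le t) h𝓕le (hci t) hf hfm

/-- **Brémaud–Yor characterization of the (H) hypothesis.** Every `𝓕`-martingale is a
`𝓖`-martingale iff for every `t`, the σ-algebras `𝓖 t` and `𝓕_∞` are conditionally
independent given `𝓕 t`. -/
theorem bremaud_yor {μ : Measure Ω} [IsProbabilityMeasure μ]
    (𝓕 𝓖 : Filtration ℝ≥0 m)
    (h𝓕 : UsualConditions 𝓕 μ) (h𝓖 : UsualConditions 𝓖 μ)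
    (hle : ∀ t : ℝ≥0, (𝓕 t : MeasurableSpace Ω) ≤ 𝓖 t) :
    (∀ M : ℝ≥0 → Ω → ℝ, Martingale M 𝓕 μ → Martingale M 𝓖 μ) ↔
      (∀ t : ℝ≥0,
        CondIndepSigma (𝓖 t) (⨆ s : ℝ≥0, (𝓕 s : MeasurableSpace Ω)) (𝓕 t) μ) :=
  bremaud_yor_general 𝓕 𝓖 hle

end Enlargement
end
end

section
/- Characterization of (H) via projections of bounded functionals: Let (Ω,F,P) be a probability space with filtrations (F_t) ⊆ (G_t) satisfying the usual assumptions. Then every (F_t)-martingale is a (G_t)-martingale if and only if for every t ≥ 0 and every bounded F_∞-measurable random variable F one has E[F | G_t] = E[F | F_t] almost surely. -/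
open MeasureTheory Filter Set ProbabilityTheory
open scoped NNReal ENNReal

noncomputable section

namespace Enlargement

variable {Ω : Type*} {m : MeasurableSpace Ω}

/-! The projection property is closed under L¹ limits, because conditional expectations are
L¹-contractions. (⇒) For bounded `F ∈ 𝓕_∞`, `E[F | 𝓕_·]` is an `𝓕`-martingale, hence a
`𝓖`-martingale, so `E[E[F | 𝓕_n] | 𝓖_t] = E[F | 𝓕_t] = E[E[F | 𝓕_n] | 𝓕_t]` for `n ≥ t`, and
`E[F | 𝓕_n] → F` in L¹ by Lévy's upward theorem. (⇐) Truncations of an `𝓕`-martingale's value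
`M_t` converge to it in L¹, so `E[M_t | 𝓖_s] = E[M_t | 𝓕_s] = M_s`. -/

open scoped Topology

theorem eLpNorm_condExp_sub_le {E : Type*} [NormedAddCommGroup E] [NormedSpace ℝ E]
    [CompleteSpace E] {μ : Measure Ω} {m' : MeasurableSpace Ω} {f g : Ω → E}
    (hf : Integrable f μ) (hg : Integrable g μ) :
    eLpNorm (μ[f|m'] - μ[g|m']) 1 μ ≤ eLpNorm (f - g) 1 μ :=
  calc eLpNorm (μ[f|m'] - μ[g|m']) 1 μ = eLpNorm (μ[f - g|m']) 1 μ :=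
        eLpNorm_congr_ae (condExp_sub hf hg m').symm
    _ ≤ eLpNorm (f - g) 1 μ := eLpNorm_condExp_le_eLpNorm _ le_rfl

theorem condExp_ae_eq_of_tendsto_eLpNorm {E : Type*} [NormedAddCommGroup E] [NormedSpace ℝ E]
    [CompleteSpace E] {μ : Measure Ω} {m₁ m₂ : MeasurableSpace Ω} {ι : Type*} {l : Filter ι}
    [l.NeBot] {f : ι → Ω → E} {g : Ω → E} (hf : ∀ i, Integrable (f i) μ) (hg : Integrable g μ)
    (hfg : Tendsto (fun i => eLpNorm (f i - g) 1 μ) l (𝓝 0))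
    (heq : ∀ᶠ i in l, μ[f i|m₁] =ᵐ[μ] μ[f i|m₂]) :
    μ[g|m₁] =ᵐ[μ] μ[g|m₂] := by
  have hbound : ∀ᶠ i in l,
      eLpNorm (μ[g|m₁] - μ[g|m₂]) 1 μ ≤ 2 * eLpNorm (f i - g) 1 μ := by
    filter_upwards [heq] with i hi
    have hsplit : μ[g|m₁] - μ[g|m₂] =ᵐ[μ] (μ[g|m₁] - μ[f i|m₁]) + (μ[f i|m₂] - μ[g|m₂]) := by
      filter_upwards [hi] with ω hω
      simp only [Pi.sub_apply, Pi.add_apply, hω]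
      abel
    calc eLpNorm (μ[g|m₁] - μ[g|m₂]) 1 μ
        = eLpNorm ((μ[g|m₁] - μ[f i|m₁]) + (μ[f i|m₂] - μ[g|m₂])) 1 μ := eLpNorm_congr_ae hsplit
      _ ≤ eLpNorm (μ[g|m₁] - μ[f i|m₁]) 1 μ + eLpNorm (μ[f i|m₂] - μ[g|m₂]) 1 μ :=
        eLpNorm_add_le (integrable_condExp.sub integrable_condExp).aestronglyMeasurable
          (integrable_condExp.sub integrable_condExp).aestronglyMeasurable le_rfl
      _ ≤ eLpNorm (g - f i) 1 μ + eLpNorm (f i - g) 1 μ :=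
        add_le_add (eLpNorm_condExp_sub_le hg (hf i)) (eLpNorm_condExp_sub_le (hf i) hg)
      _ = 2 * eLpNorm (f i - g) 1 μ := by rw [eLpNorm_sub_comm, two_mul]
  have hzero : eLpNorm (μ[g|m₁] - μ[g|m₂]) 1 μ = 0 := by
    refine le_antisymm (ge_of_tendsto ?_ hbound) zero_le
    simpa using ENNReal.Tendsto.const_mul hfg (Or.inr ENNReal.ofNat_ne_top)
  have hsub := (eLpNorm_eq_zero_iff
    (integrable_condExp.sub integrable_condExp).aestronglyMeasurable one_ne_zero).1 hzero
  filter_upwards [hsub] with ω hω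
  exact sub_eq_zero.1 hω

def _root_.MeasureTheory.Filtration.comp {ι ι' : Type*} [Preorder ι] [Preorder ι']
    (𝓕 : Filtration ι' m) {φ : ι → ι'} (hφ : Monotone φ) : Filtration ι m where
  seq i := 𝓕 (φ i)
  mono' _ _ hij := 𝓕.mono (hφ hij)
  le' i := 𝓕.le (φ i)

theorem _root_.MeasureTheory.Filtration.iSup_comp_eq {ι ι' : Type*} [Preorder ι] [Preorder ι']
    (𝓕 : Filtration ι' m) {φ : ι → ι'} (hφ : Monotone φ) (hcofinal : ∀ j, ∃ i, j ≤ φ i) :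
    ⨆ i, (𝓕.comp hφ i : MeasurableSpace Ω) = ⨆ j, 𝓕 j := by
  refine le_antisymm (iSup_le fun i => le_iSup (fun j => (𝓕 j : MeasurableSpace Ω)) (φ i)) ?_
  refine iSup_le fun j => ?_
  obtain ⟨i, hi⟩ := hcofinal j
  exact (𝓕.mono hi).trans (le_iSup (fun i => (𝓕.comp hφ i : MeasurableSpace Ω)) i)

theorem tendsto_eLpNorm_condExp_natCast {μ : Measure Ω} [IsFiniteMeasure μ]
    (𝓕 : Filtration ℝ≥0 m) {F : Ω → ℝ} (hF : Integrable F μ)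
    (hFm : StronglyMeasurable[⨆ s, 𝓕 s] F) :
    Tendsto (fun n : ℕ => eLpNorm (μ[F|𝓕 n] - F) 1 μ) atTop (𝓝 0) := by
  have hsup := 𝓕.iSup_comp_eq (φ := fun n : ℕ => (n : ℝ≥0)) Nat.mono_cast
    fun s => ⟨⌈s⌉₊, Nat.le_ceil s⟩
  exact hF.tendsto_eLpNorm_condExp (ℱ := 𝓕.comp Nat.mono_cast) (hsup ▸ hFm)

theorem tendsto_eLpNorm_truncation_sub {μ : Measure Ω} {f : Ω → ℝ} (hf : Integrable f μ) :
    Tendsto (fun n : ℕ => eLpNorm (truncation f n - f) 1 μ) atTop (𝓝 0) := by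
  have hlim : ∀ ω, Tendsto (fun n : ℕ => truncation f n ω) atTop (𝓝 (f ω)) := fun ω =>
    tendsto_const_nhds.congr' <| (tendsto_natCast_atTop_atTop.eventually_gt_atTop |f ω|).mono
      fun n hn => (truncation_eq_self hn).symm
  simpa only [eLpNorm_one_eq_lintegral_enorm, Pi.sub_apply, ofReal_norm] using
    tendsto_lintegral_norm_of_dominated_convergence
      (fun n => hf.aestronglyMeasurable.truncation) hf.hasFiniteIntegral.norm
      (fun n => ae_of_all _ fun ω => abs_truncation_le_abs_self f n ω) (ae_of_all _ hlim)

theorem condExp_ae_eq_of_martingale_condExp {μ : Measure Ω} [IsFiniteMeasure μ]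
    {𝓕 𝓖 : Filtration ℝ≥0 m} {F : Ω → ℝ} (hF : Integrable F μ)
    (hFm : StronglyMeasurable[⨆ s, 𝓕 s] F) (hM : Martingale (fun u => μ[F|𝓕 u]) 𝓖 μ)
    (t : ℝ≥0) : μ[F|𝓖 t] =ᵐ[μ] μ[F|𝓕 t] := by
  refine condExp_ae_eq_of_tendsto_eLpNorm (fun n => integrable_condExp) hF
    (tendsto_eLpNorm_condExp_natCast 𝓕 hF hFm) ?_
  filter_upwards [tendsto_natCast_atTop_atTop.eventually_ge_atTop t] with n hn
  calc μ[μ[F|𝓕 n]|𝓖 t] =ᵐ[μ] μ[F|𝓕 t] := hM.condExp_ae_eq hn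
    _ =ᵐ[μ] μ[μ[F|𝓕 n]|𝓕 t] := (condExp_condExp_of_le (𝓕.mono hn) (𝓕.le n)).symm

theorem condExp_ae_eq_of_forall_bounded {μ : Measure Ω} [IsFiniteMeasure μ]
    {m' m₁ m₂ : MeasurableSpace Ω}
    (h : ∀ F : Ω → ℝ, StronglyMeasurable[m'] F → (∃ C : ℝ, ∀ ω, |F ω| ≤ C) →
      μ[F|m₁] =ᵐ[μ] μ[F|m₂])
    {X : Ω → ℝ} (hX : Integrable X μ) (hXm : StronglyMeasurable[m'] X) :
    μ[X|m₁] =ᵐ[μ] μ[X|m₂] := by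
  refine condExp_ae_eq_of_tendsto_eLpNorm (l := atTop)
    (fun n : ℕ => hX.aestronglyMeasurable.integrable_truncation) hX
    (tendsto_eLpNorm_truncation_sub hX) (Eventually.of_forall fun n => h _ ?_ ?_)
  · exact (stronglyMeasurable_id.indicator measurableSet_Ioc).comp_measurable hXm.measurable
  · exact ⟨n, fun ω => (abs_truncation_le_bound X n ω).trans_eq (Nat.abs_cast n)⟩

theorem H_iff_proj_Finfty_general {μ : Measure Ω} [IsProbabilityMeasure μ]
    (𝓕 𝓖 : Filtration ℝ≥0 m)
    (hle : ∀ t : ℝ≥0, (𝓕 t : MeasurableSpace Ω) ≤ 𝓖 t) :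
    (∀ M : ℝ≥0 → Ω → ℝ, Martingale M 𝓕 μ → Martingale M 𝓖 μ) ↔
      (∀ (t : ℝ≥0) (F : Ω → ℝ),
        StronglyMeasurable[⨆ s : ℝ≥0, (𝓕 s : MeasurableSpace Ω)] F →
        (∃ C : ℝ, ∀ ω, |F ω| ≤ C) →
        μ[F | 𝓖 t] =ᵐ[μ] μ[F | 𝓕 t]) := by
  constructor
  · rintro hH t F hFm ⟨C, hC⟩
    have hF : Integrable F μ :=
      .of_bound (hFm.mono (iSup_le 𝓕.le)).aestronglyMeasurable C (ae_of_all _ hC)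
    exact condExp_ae_eq_of_martingale_condExp hF hFm (hH _ (martingale_condExp F 𝓕 μ)) t
  · intro hproj M hM
    refine ⟨fun u => (hM.stronglyAdapted u).mono (hle u), fun s t hst => ?_⟩
    calc μ[M t|𝓖 s] =ᵐ[μ] μ[M t|𝓕 s] :=
          condExp_ae_eq_of_forall_bounded (hproj s) (hM.integrable t)
            ((hM.stronglyAdapted t).mono (le_iSup (fun u => (𝓕 u : MeasurableSpace Ω)) t))
      _ =ᵐ[μ] M s := hM.condExp_ae_eq hst

/-- **(H) via projections of bounded `𝓕_∞`-functionals.** Every `𝓕`-martingale is a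
`𝓖`-martingale iff for every `t` and every bounded `𝓕_∞`-measurable `F`,
`E[F | 𝓖 t] = E[F | 𝓕 t]` a.s. -/
theorem H_iff_proj_Finfty {μ : Measure Ω} [IsProbabilityMeasure μ]
    (𝓕 𝓖 : Filtration ℝ≥0 m)
    (h𝓕 : UsualConditions 𝓕 μ) (h𝓖 : UsualConditions 𝓖 μ)
    (hle : ∀ t : ℝ≥0, (𝓕 t : MeasurableSpace Ω) ≤ 𝓖 t) :
    (∀ M : ℝ≥0 → Ω → ℝ, Martingale M 𝓕 μ → Martingale M 𝓖 μ) ↔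
      (∀ (t : ℝ≥0) (F : Ω → ℝ),
        StronglyMeasurable[⨆ s : ℝ≥0, (𝓕 s : MeasurableSpace Ω)] F →
        (∃ C : ℝ, ∀ ω, |F ω| ≤ C) →
        μ[F | 𝓖 t] =ᵐ[μ] μ[F | 𝓕 t]) :=
  H_iff_proj_Finfty_general 𝓕 𝓖 hle

end Enlargement
end
end

section
/- Characterization of (H) via projections of bounded G_t-functionals: Let (Ω,F,P) be a probability space with filtrations (F_t) ⊆ (G_t) satisfying the usual assumptions. Then every (F_t)-martingale is a (G_t)-martingale if and only if for every t ≥ 0 and every bounded G_t-measurable random variable G one has E[G | F_∞] = E[G | F_t] almost surely. -/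
/-!
Both sides of the equivalence say that `𝓕 ∞` and `𝓖 t` are conditionally independent given
`𝓕 t`, tested on indicators. The bridge is the self-adjointness of conditional expectation:
`∫_A E[X|m₀] = ∫ X ⬝ E[1_A|m₀]`, so for `m₁`-measurable `X` this equals `∫_A X` as soon as
`E[1_A|m₁] = E[1_A|m₀]`.

Under (H), for `A ∈ 𝓕 s` the `𝓕`-martingale `E[1_A|𝓕 ·]` is a `𝓖`-martingale, whence
`E[1_A|𝓖 t] = E[1_A|𝓕 t]`; hence `∫_A E[G|𝓕 t] = ∫_A G` for `A ∈ ⋃ s, 𝓕 s`, and a π-λ argument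
identifies `E[G|𝓕 ∞]` with `E[G|𝓕 t]`. Conversely, the projection property for `G = 1_A`,
`A ∈ 𝓖 r`, gives `∫_A M r = ∫_A E[M u|𝓕 r] = ∫_A M u`.
-/

open MeasureTheory Filter Set ProbabilityTheory
open scoped NNReal ENNReal

noncomputable section

namespace Enlargement

variable {Ω : Type*} {m : MeasurableSpace Ω}

section ConditionalExpectation

variable {μ : Measure Ω} {m₀ : MeasurableSpace Ω}

lemma integral_mul_indicator_one (f : Ω → ℝ) {A : Set Ω} (hA : MeasurableSet[m] A) :
    ∫ ω, f ω * A.indicator 1 ω ∂μ = ∫ ω in A, f ω ∂μ := by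
  simp_rw [← Set.indicator_mul_right, Pi.one_apply, mul_one, integral_indicator hA]

lemma abs_indicator_one_le (A : Set Ω) (ω : Ω) : |A.indicator (1 : Ω → ℝ) ω| ≤ 1 := by
  by_cases hω : ω ∈ A <;> simp [hω]

/-- Both sides equal `∫ μ[f|m₀] * μ[g|m₀]`, by pulling out the `m₀`-measurable factor. -/
lemma integral_mul_condExp_comm [IsFiniteMeasure μ] (hm₀ : m₀ ≤ m) {f g : Ω → ℝ}
    (hf : Integrable f μ) (hg : AEStronglyMeasurable[m] g μ) {C : ℝ} (hgC : ∀ᵐ ω ∂μ, |g ω| ≤ C) :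
    ∫ ω, f ω * μ[g|m₀] ω ∂μ = ∫ ω, μ[f|m₀] ω * g ω ∂μ := by
  have hg_int : Integrable g μ := .of_bound hg C (by simpa only [Real.norm_eq_abs] using hgC)
  have hgm_bdd : ∀ᵐ ω ∂μ, ‖μ[g|m₀] ω‖ ≤ C := by
    simpa only [Real.norm_eq_abs] using ae_bdd_abs_condExp_of_ae_bdd_abs (m := m₀) hgC
  have hf_mul : Integrable (μ[g|m₀] * f) μ :=
    hf.bdd_mul (stronglyMeasurable_condExp.mono hm₀).aestronglyMeasurable hgm_bdd
  have hg_mul : Integrable (μ[f|m₀] * g) μ := by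
    refine (integrable_condExp.bdd_mul (c := C) hg ?_).congr (.of_forall fun ω => mul_comm _ _)
    simpa only [Real.norm_eq_abs] using hgC
  calc ∫ ω, f ω * μ[g|m₀] ω ∂μ
      = ∫ ω, μ[μ[g|m₀] * f|m₀] ω ∂μ := by
        rw [integral_condExp hm₀]; simp_rw [Pi.mul_apply, mul_comm]
    _ = ∫ ω, μ[μ[f|m₀] * g|m₀] ω ∂μ := by
        refine integral_congr_ae ?_
        filter_upwards [condExp_mul_of_stronglyMeasurable_left stronglyMeasurable_condExp hf_mul hf,
          condExp_mul_of_stronglyMeasurable_left stronglyMeasurable_condExp hg_mul hg_int]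
          with ω h₁ h₂
        rw [h₁, h₂, Pi.mul_apply, Pi.mul_apply, mul_comm]
    _ = ∫ ω, μ[f|m₀] ω * g ω ∂μ := integral_condExp hm₀

lemma setIntegral_condExp_of_condExp_indicator_ae_eq [IsFiniteMeasure μ] {m₁ : MeasurableSpace Ω}
    (hm₀ : m₀ ≤ m) (hm₁ : m₁ ≤ m) {X : Ω → ℝ} (hX : Integrable X μ)
    (hXm : StronglyMeasurable[m₁] X) {A : Set Ω} (hA : MeasurableSet[m] A)
    (h : μ[A.indicator (1 : Ω → ℝ)|m₁] =ᵐ[μ] μ[A.indicator 1|m₀]) :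
    ∫ ω in A, μ[X|m₀] ω ∂μ = ∫ ω in A, X ω ∂μ := by
  have hI : AEStronglyMeasurable[m] (A.indicator (1 : Ω → ℝ)) μ :=
    (stronglyMeasurable_one.indicator hA).aestronglyMeasurable
  have hI_bdd := Filter.Eventually.of_forall (f := ae μ) (abs_indicator_one_le A)
  calc ∫ ω in A, μ[X|m₀] ω ∂μ
      = ∫ ω, X ω * μ[A.indicator 1|m₀] ω ∂μ := by
        rw [integral_mul_condExp_comm hm₀ hX hI hI_bdd, integral_mul_indicator_one _ hA]
    _ = ∫ ω, X ω * μ[A.indicator 1|m₁] ω ∂μ := by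
        refine integral_congr_ae ?_
        filter_upwards [h] with ω hω
        rw [hω]
    _ = ∫ ω in A, X ω ∂μ := by
        rw [integral_mul_condExp_comm hm₁ hX hI hI_bdd, condExp_of_stronglyMeasurable hm₁ hXm hX,
          integral_mul_indicator_one _ hA]

end ConditionalExpectation

section PiSystem

variable {E : Type*} [NormedAddCommGroup E] [NormedSpace ℝ E] {μ : Measure Ω}

lemma setIntegral_eq_of_isPiSystem {m₀ : MeasurableSpace Ω} (hm₀ : m₀ ≤ m) {S : Set (Set Ω)}
    (h_eq : m₀ = MeasurableSpace.generateFrom S) (h_inter : IsPiSystem S) {f g : Ω → E}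
    (hf : Integrable f μ) (hg : Integrable g μ)
    (basic : ∀ A ∈ S, ∫ ω in A, f ω ∂μ = ∫ ω in A, g ω ∂μ)
    (h_univ : ∫ ω, f ω ∂μ = ∫ ω, g ω ∂μ) {A : Set Ω} (hA : MeasurableSet[m₀] A) :
    ∫ ω in A, f ω ∂μ = ∫ ω in A, g ω ∂μ := by
  induction A, hA using MeasurableSpace.induction_on_inter h_eq h_inter with
  | empty => simp
  | basic A hA => exact basic A hA
  | compl A hA ih =>
    rw [setIntegral_compl (hm₀ A hA) hf, setIntegral_compl (hm₀ A hA) hg, ih, h_univ]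
  | iUnion A hdisj hA ih =>
    rw [integral_iUnion (fun i => hm₀ _ (hA i)) hdisj hf.integrableOn,
      integral_iUnion (fun i => hm₀ _ (hA i)) hdisj hg.integrableOn]
    exact tsum_congr ih

lemma ae_eq_condExp_iSup_of_forall_setIntegral_eq [CompleteSpace E] [IsFiniteMeasure μ]
    {ι : Type*} [SemilatticeSup ι] [Nonempty ι] (𝓕 : Filtration ι m) {f g : Ω → E}
    (hf : Integrable f μ) (hg : Integrable g μ) (hgm : StronglyMeasurable[⨆ i, 𝓕 i] g)
    (h : ∀ i A, MeasurableSet[𝓕 i] A → ∫ ω in A, g ω ∂μ = ∫ ω in A, f ω ∂μ) :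
    g =ᵐ[μ] μ[f|⨆ i, 𝓕 i] := by
  have h𝓕 : (⨆ i, 𝓕 i) ≤ m := iSup_le 𝓕.le
  have hpi : IsPiSystem {A | ∃ i, MeasurableSet[𝓕 i] A} := by
    rw [Set.ofPred_exists]
    exact isPiSystem_iUnion_of_monotone _ (fun i => (𝓕 i).isPiSystem_measurableSet)
      fun _ _ => 𝓕.mono
  have h_univ : ∫ ω, g ω ∂μ = ∫ ω, f ω ∂μ := by
    obtain ⟨i⟩ := ‹Nonempty ι›
    simpa only [setIntegral_univ] using h i univ .univ
  refine ae_eq_condExp_of_forall_setIntegral_eq h𝓕 hf (fun _ _ _ => hg.integrableOn)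
    (fun A hA _ => ?_) hgm.aestronglyMeasurable
  exact setIntegral_eq_of_isPiSystem h𝓕 (MeasurableSpace.measurableSpace_iSup_eq _) hpi hg hf
    (fun A ⟨i, hA⟩ => h i A hA) h_univ hA

end PiSystem

section Martingale

variable {ι : Type*} {μ : Measure Ω} [IsFiniteMeasure μ]

lemma condExp_ae_eq_of_forall_martingale_s13 [Preorder ι] {𝓕 𝓖 : Filtration ι m}
    (hH : ∀ M : ι → Ω → ℝ, Martingale M 𝓕 μ → Martingale M 𝓖 μ) {t u : ι} (htu : t ≤ u)
    {X : Ω → ℝ} (hX : Integrable X μ) (hXm : StronglyMeasurable[𝓕 u] X) :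
    μ[X|𝓖 t] =ᵐ[μ] μ[X|𝓕 t] := by
  have h := (hH _ (martingale_condExp X 𝓕 μ)).condExp_ae_eq htu
  rwa [condExp_of_stronglyMeasurable (𝓕.le u) hXm hX] at h

lemma condExp_iSup_ae_eq_of_forall_martingale [SemilatticeSup ι] {𝓕 𝓖 : Filtration ι m}
    (hH : ∀ M : ι → Ω → ℝ, Martingale M 𝓕 μ → Martingale M 𝓖 μ) {t : ι} {G : Ω → ℝ}
    (hG : Integrable G μ) (hGm : StronglyMeasurable[𝓖 t] G) :
    μ[G|⨆ s, 𝓕 s] =ᵐ[μ] μ[G|𝓕 t] := by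
  have : Nonempty ι := ⟨t⟩
  refine (ae_eq_condExp_iSup_of_forall_setIntegral_eq 𝓕 hG integrable_condExp
    (stronglyMeasurable_condExp.mono (le_iSup _ t)) fun s A hA => ?_).symm
  have hA' : MeasurableSet[𝓕 (s ⊔ t)] A := 𝓕.mono le_sup_left _ hA
  exact setIntegral_condExp_of_condExp_indicator_ae_eq (𝓕.le t) (𝓖.le t) hG hGm (𝓕.le _ _ hA')
    (condExp_ae_eq_of_forall_martingale_s13 hH le_sup_right
      ((integrable_const 1).indicator (𝓕.le _ _ hA')) (stronglyMeasurable_one.indicator hA'))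

lemma martingale_of_forall_condExp_indicator_iSup_ae_eq [Preorder ι] {𝓕 𝓖 : Filtration ι m}
    (hle : ∀ t, 𝓕 t ≤ 𝓖 t)
    (hproj : ∀ t A, MeasurableSet[𝓖 t] A →
      μ[A.indicator (1 : Ω → ℝ)|⨆ s, 𝓕 s] =ᵐ[μ] μ[A.indicator 1|𝓕 t])
    {M : ι → Ω → ℝ} (hM : Martingale M 𝓕 μ) : Martingale M 𝓖 μ := by
  refine ⟨fun t => (hM.stronglyAdapted t).mono (hle t), fun r u hru => ?_⟩
  refine (ae_eq_condExp_of_forall_setIntegral_eq (𝓖.le r) (hM.integrable u)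
    (fun _ _ _ => (hM.integrable r).integrableOn) (fun A hA _ => ?_)
    ((hM.stronglyAdapted r).mono (hle r)).aestronglyMeasurable).symm
  calc ∫ ω in A, M r ω ∂μ
      = ∫ ω in A, μ[M u|𝓕 r] ω ∂μ :=
        setIntegral_congr_ae (𝓖.le r _ hA) ((hM.condExp_ae_eq hru).mono fun _ h _ => h.symm)
    _ = ∫ ω in A, M u ω ∂μ :=
        setIntegral_condExp_of_condExp_indicator_ae_eq (𝓕.le r) (iSup_le 𝓕.le) (hM.integrable u)
          ((hM.stronglyAdapted u).mono (le_iSup _ u)) (𝓖.le r _ hA) (hproj r A hA)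

end Martingale

theorem H_iff_proj_Gt_general {μ : Measure Ω} [IsProbabilityMeasure μ]
    (𝓕 𝓖 : Filtration ℝ≥0 m)
    (hle : ∀ t : ℝ≥0, (𝓕 t : MeasurableSpace Ω) ≤ 𝓖 t) :
    (∀ M : ℝ≥0 → Ω → ℝ, Martingale M 𝓕 μ → Martingale M 𝓖 μ) ↔
      (∀ (t : ℝ≥0) (G : Ω → ℝ),
        StronglyMeasurable[𝓖 t] G →
        (∃ C : ℝ, ∀ ω, |G ω| ≤ C) →
        μ[G | (⨆ s : ℝ≥0, (𝓕 s : MeasurableSpace Ω))] =ᵐ[μ] μ[G | 𝓕 t]) := by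
  refine ⟨fun hH t G hGm ⟨C, hC⟩ => ?_, fun hproj M hM => ?_⟩
  · have hG : Integrable G μ :=
      .of_bound (hGm.mono (𝓖.le t)).aestronglyMeasurable C (.of_forall hC)
    exact condExp_iSup_ae_eq_of_forall_martingale hH hG hGm
  · refine martingale_of_forall_condExp_indicator_iSup_ae_eq hle (fun t A hA => ?_) hM
    exact hproj t _ (stronglyMeasurable_one.indicator hA) ⟨1, abs_indicator_one_le A⟩

/-- **(H) via projections of bounded `𝓖 t`-functionals.** Every `𝓕`-martingale is a
`𝓖`-martingale iff for every `t` and every bounded `𝓖 t`-measurable `G`,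
`E[G | 𝓕_∞] = E[G | 𝓕 t]` a.s. -/
theorem H_iff_proj_Gt {μ : Measure Ω} [IsProbabilityMeasure μ]
    (𝓕 𝓖 : Filtration ℝ≥0 m)
    (h𝓕 : UsualConditions 𝓕 μ) (h𝓖 : UsualConditions 𝓖 μ)
    (hle : ∀ t : ℝ≥0, (𝓕 t : MeasurableSpace Ω) ≤ 𝓖 t) :
    (∀ M : ℝ≥0 → Ω → ℝ, Martingale M 𝓕 μ → Martingale M 𝓖 μ) ↔
      (∀ (t : ℝ≥0) (G : Ω → ℝ),
        StronglyMeasurable[𝓖 t] G →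
        (∃ C : ℝ, ∀ ω, |G ω| ≤ C) →
        μ[G | (⨆ s : ℝ≥0, (𝓕 s : MeasurableSpace Ω))] =ᵐ[μ] μ[G | 𝓕 t]) :=
  H_iff_proj_Gt_general 𝓕 𝓖 hle

end Enlargement
end
end

section
/- Characterization of (H) for progressive enlargements via the conditional law of ρ: Let (Ω,F,(F_t)_{t≥0},P) be a filtered probability space satisfying the usual hypotheses, ρ a random time, and (F_t^ρ) the progressive enlargement of (F_t) by ρ. Then every (F_t)-martingale is an (F_t^ρ)-martingale if and only if for all 0 ≤ s ≤ t one has P(ρ ≤ s | F_t) = P(ρ ≤ s | F_∞) almost surely. -/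
open MeasureTheory Filter Set ProbabilityTheory
open scoped NNReal ENNReal

noncomputable section

namespace Enlargement

variable {Ω : Type*} {m : MeasurableSpace Ω}

/-!
(H) holds iff `P(G | 𝓕 t) = P(G | 𝓕_∞)` for every `t` and every `G ∈ 𝓖 t`. Given (H), test it on
the closed martingales `P(A | 𝓕 ·)`; conversely, `∫_G M_j = ∫ P(G | 𝓕_∞) M_j` can be computed
with `P(G | 𝓕 i)` in place of `P(G | 𝓕_∞)`, and the martingale property under `𝓕` finishes.

For the progressive enlargement, `𝓖 t ≤ 𝓕 v ⊔ σ(ρ ∧ v)` whenever `t < v`. Thanks to the symmetry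
`∫_A P(G | 𝓕 v) = ∫_G P(A | 𝓕 v)`, the sets `G` with `P(G | 𝓕 v) = P(G | 𝓕_∞)` form a Dynkin
system; on the generators `F ∩ {ρ ≤ s}` with `F ∈ 𝓕 v`, `s ≤ v`, the identity is the hypothesis
on the conditional law, with `1_F` pulled out. Right-continuity and completeness of `𝓕` then
bring `v` down to `t`.
-/

section SetIntegral

variable {μ : Measure Ω}

lemma isPiSystem_image2_inter {C D : Set (Set Ω)} (hC : IsPiSystem C) (hD : IsPiSystem D) :
    IsPiSystem (image2 (· ∩ ·) C D) := by
  rintro _ ⟨F, hF, B, hB, rfl⟩ _ ⟨F', hF', B', hB', rfl⟩ hne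
  rw [inter_inter_inter_comm] at hne ⊢
  exact mem_image2_of_mem (hC F hF F' hF' hne.left) (hD B hB B' hB' hne.right)

lemma generateFrom_image2_inter {C D : Set (Set Ω)} (hC : univ ∈ C) (hD : univ ∈ D) :
    MeasurableSpace.generateFrom (image2 (· ∩ ·) C D) =
      MeasurableSpace.generateFrom C ⊔ MeasurableSpace.generateFrom D := by
  refine le_antisymm (MeasurableSpace.generateFrom_le ?_) (sup_le ?_ ?_)
  · rintro _ ⟨F, hF, B, hB, rfl⟩
    exact (le_sup_left (b := MeasurableSpace.generateFrom D) _
      (MeasurableSpace.measurableSet_generateFrom hF)).inter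
      (le_sup_right (a := MeasurableSpace.generateFrom C) _
        (MeasurableSpace.measurableSet_generateFrom hB))
  · exact MeasurableSpace.generateFrom_mono fun F hF => ⟨F, hF, univ, hD, inter_univ F⟩
  · exact MeasurableSpace.generateFrom_mono fun B hB => ⟨univ, hC, B, hB, univ_inter B⟩

lemma setIntegral_eq_of_isPiSystem_s14 {E : Type*} [NormedAddCommGroup E] [NormedSpace ℝ E]
    {m' : MeasurableSpace Ω} (hm : m' ≤ m) {C : Set (Set Ω)}
    (hgen : m' = MeasurableSpace.generateFrom C) (hC : IsPiSystem C) {f g : Ω → E}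
    (hf : Integrable f μ) (hg : Integrable g μ) (huniv : ∫ x, f x ∂μ = ∫ x, g x ∂μ)
    (hbasic : ∀ s ∈ C, ∫ x in s, f x ∂μ = ∫ x in s, g x ∂μ) {s : Set Ω}
    (hs : MeasurableSet[m'] s) : ∫ x in s, f x ∂μ = ∫ x in s, g x ∂μ := by
  induction s, hs using MeasurableSpace.induction_on_inter hgen hC with
  | empty => simp
  | basic s hs => exact hbasic s hs
  | compl s hs ih =>
    rw [setIntegral_compl (hm s hs) hf, setIntegral_compl (hm s hs) hg, ih, huniv]
  | iUnion s hdisj hs ih =>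
    rw [integral_iUnion (fun n => hm _ (hs n)) hdisj hf.integrableOn,
      integral_iUnion (fun n => hm _ (hs n)) hdisj hg.integrableOn]
    exact tsum_congr ih

lemma setIntegral_indicator_one_comm {A B : Set Ω} (hA : MeasurableSet A) (hB : MeasurableSet B) :
    ∫ x in A, B.indicator (1 : Ω → ℝ) x ∂μ = ∫ x in B, A.indicator (1 : Ω → ℝ) x ∂μ := by
  rw [setIntegral_indicator hB, setIntegral_indicator hA, inter_comm]

end SetIntegral

section CondExp

variable {μ : Measure Ω} [IsFiniteMeasure μ] {m₁ m₂ : MeasurableSpace Ω}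

lemma condExp_indicator_ae_eq_condExp_indicator_one_mul {f : Ω → ℝ}
    (hf : StronglyMeasurable[m₁] f) (hfi : Integrable f μ) {s : Set Ω} (hs : MeasurableSet[m] s) :
    μ[s.indicator f|m₁] =ᵐ[μ] μ[s.indicator 1|m₁] * f := by
  have hsf : s.indicator 1 * f = s.indicator f := by
    ext x; by_cases hx : x ∈ s <;> simp [hx]
  rw [← hsf]
  exact condExp_mul_of_stronglyMeasurable_right hf (hsf ▸ hfi.indicator hs)
    ((integrable_const (1 : ℝ)).indicator hs)

lemma setIntegral_eq_integral_condExp_indicator_mul (hm : m₁ ≤ m) {f : Ω → ℝ}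
    (hf : StronglyMeasurable[m₁] f) (hfi : Integrable f μ) {s : Set Ω} (hs : MeasurableSet[m] s) :
    ∫ x in s, f x ∂μ = ∫ x, μ[s.indicator 1|m₁] x * f x ∂μ := by
  calc ∫ x in s, f x ∂μ = ∫ x, s.indicator f x ∂μ := (integral_indicator hs).symm
    _ = ∫ x, μ[s.indicator f|m₁] x ∂μ := (integral_condExp hm).symm
    _ = ∫ x, μ[s.indicator 1|m₁] x * f x ∂μ :=
      integral_congr_ae (condExp_indicator_ae_eq_condExp_indicator_one_mul hf hfi hs)

lemma integrable_condExp_indicator_mul {f : Ω → ℝ}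
    (hf : StronglyMeasurable[m₁] f) (hfi : Integrable f μ) {s : Set Ω} (hs : MeasurableSet[m] s) :
    Integrable (μ[s.indicator 1|m₁] * f) μ :=
  integrable_condExp.congr (condExp_indicator_ae_eq_condExp_indicator_one_mul hf hfi hs)

lemma integral_mul_condExp (hm : m₁ ≤ m) {f g : Ω → ℝ} (hg : StronglyMeasurable[m₁] g)
    (hgf : Integrable (g * f) μ) (hf : Integrable f μ) :
    ∫ x, g x * μ[f|m₁] x ∂μ = ∫ x, g x * f x ∂μ := by
  calc ∫ x, g x * μ[f|m₁] x ∂μ = ∫ x, μ[g * f|m₁] x ∂μ :=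
        integral_congr_ae (condExp_mul_of_stronglyMeasurable_left hg hgf hf).symm
    _ = ∫ x, g x * f x ∂μ := integral_condExp hm

lemma setIntegral_condExp_indicator_comm (hm : m₁ ≤ m) {A B : Set Ω} (hA : MeasurableSet[m] A)
    (hB : MeasurableSet[m] B) :
    ∫ x in A, μ[B.indicator (1 : Ω → ℝ)|m₁] x ∂μ =
      ∫ x in B, μ[A.indicator (1 : Ω → ℝ)|m₁] x ∂μ := by
  rw [setIntegral_eq_integral_condExp_indicator_mul hm stronglyMeasurable_condExp
      integrable_condExp hA,
    setIntegral_eq_integral_condExp_indicator_mul hm stronglyMeasurable_condExp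
      integrable_condExp hB]
  simp_rw [mul_comm]

lemma condExp_indicator_inter_ae_eq (hm₁₂ : m₁ ≤ m₂) {F B : Set Ω} (hF : MeasurableSet[m₁] F)
    (hB : MeasurableSet[m] B) (h : μ[B.indicator (1 : Ω → ℝ)|m₁] =ᵐ[μ] μ[B.indicator 1|m₂]) :
    μ[(F ∩ B).indicator (1 : Ω → ℝ)|m₁] =ᵐ[μ] μ[(F ∩ B).indicator 1|m₂] := by
  have hBi : Integrable (B.indicator (1 : Ω → ℝ)) μ := (integrable_const (1 : ℝ)).indicator hB
  rw [← indicator_indicator]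
  calc μ[F.indicator (B.indicator 1)|m₁] =ᵐ[μ] F.indicator μ[B.indicator 1|m₁] :=
        condExp_indicator hBi hF
    _ =ᵐ[μ] F.indicator μ[B.indicator 1|m₂] := h.indicator
    _ =ᵐ[μ] μ[F.indicator (B.indicator 1)|m₂] := (condExp_indicator hBi (hm₁₂ _ hF)).symm



lemma setIntegral_condExp_indicator_inter (hm₁₂ : m₁ ≤ m₂) (hm₂ : m₂ ≤ m) {A F B : Set Ω}
    (hA : MeasurableSet[m₂] A) (hF : MeasurableSet[m₁] F) (hB : MeasurableSet[m] B)
    (h : μ[B.indicator (1 : Ω → ℝ)|m₁] =ᵐ[μ] μ[B.indicator 1|m₂]) :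
    ∫ x in F ∩ B, μ[A.indicator (1 : Ω → ℝ)|m₁] x ∂μ = ∫ x in F ∩ B, A.indicator 1 x ∂μ := by
  have hFB : MeasurableSet[m] (F ∩ B) := (hm₁₂.trans hm₂ _ hF).inter hB
  calc ∫ x in F ∩ B, μ[A.indicator 1|m₁] x ∂μ = ∫ x in A, μ[(F ∩ B).indicator 1|m₁] x ∂μ :=
        (setIntegral_condExp_indicator_comm (hm₁₂.trans hm₂) (hm₂ _ hA) hFB).symm
    _ = ∫ x in A, μ[(F ∩ B).indicator 1|m₂] x ∂μ :=
        setIntegral_congr_ae (hm₂ _ hA)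
          ((condExp_indicator_inter_ae_eq hm₁₂ hF hB h).mono fun x hx _ => hx)
    _ = ∫ x in A, (F ∩ B).indicator 1 x ∂μ :=
        setIntegral_condExp hm₂ ((integrable_const (1 : ℝ)).indicator hFB) hA
    _ = ∫ x in F ∩ B, A.indicator 1 x ∂μ := setIntegral_indicator_one_comm (hm₂ _ hA) hFB

theorem condExp_indicator_ae_eq_of_isPiSystem (hm₁₂ : m₁ ≤ m₂) (hm₂ : m₂ ≤ m)
    {D : Set (Set Ω)} (hD : IsPiSystem D) (hDm : ∀ B ∈ D, MeasurableSet[m] B)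
    (hDcond : ∀ B ∈ D, μ[B.indicator (1 : Ω → ℝ)|m₁] =ᵐ[μ] μ[B.indicator 1|m₂]) {G : Set Ω}
    (hG : MeasurableSet[m₁ ⊔ MeasurableSpace.generateFrom D] G) :
    μ[G.indicator (1 : Ω → ℝ)|m₁] =ᵐ[μ] μ[G.indicator 1|m₂] := by
  have hm₁ : m₁ ≤ m := hm₁₂.trans hm₂
  have hsup : m₁ ⊔ MeasurableSpace.generateFrom D ≤ m :=
    sup_le hm₁ (MeasurableSpace.generateFrom_le hDm)
  have hGm : MeasurableSet[m] G := hsup _ hG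
  have hgen : m₁ ⊔ MeasurableSpace.generateFrom D =
      MeasurableSpace.generateFrom (image2 (· ∩ ·) {F | MeasurableSet[m₁] F} (insert univ D)) := by
    rw [generateFrom_image2_inter (C := {F | MeasurableSet[m₁] F}) MeasurableSet.univ
        (mem_insert univ D),
      @MeasurableSpace.generateFrom_measurableSet Ω m₁,
      MeasurableSpace.generateFrom_insert_univ]
  have hpi := isPiSystem_image2_inter (@MeasurableSpace.isPiSystem_measurableSet Ω m₁)
    hD.insert_univ
  refine ae_eq_condExp_of_forall_setIntegral_eq hm₂ ((integrable_const (1 : ℝ)).indicator hGm)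
    (fun _ _ _ => integrable_condExp.integrableOn) (fun A hA _ => ?_)
    (stronglyMeasurable_condExp.mono hm₁₂).aestronglyMeasurable
  have hrect : ∀ S ∈ image2 (· ∩ ·) {F | MeasurableSet[m₁] F} (insert univ D),
      ∫ x in S, μ[A.indicator (1 : Ω → ℝ)|m₁] x ∂μ = ∫ x in S, A.indicator 1 x ∂μ := by
    rintro _ ⟨F, hF, B, rfl | hB, rfl⟩
    · simp only [inter_univ]
      exact setIntegral_condExp hm₁ ((integrable_const (1 : ℝ)).indicator (hm₂ _ hA)) hF
    · exact setIntegral_condExp_indicator_inter hm₁₂ hm₂ hA hF (hDm B hB) (hDcond B hB)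
  calc ∫ x in A, μ[G.indicator 1|m₁] x ∂μ = ∫ x in G, μ[A.indicator 1|m₁] x ∂μ :=
        setIntegral_condExp_indicator_comm hm₁ (hm₂ _ hA) hGm
    _ = ∫ x in G, A.indicator 1 x ∂μ :=
        setIntegral_eq_of_isPiSystem_s14 hsup hgen hpi integrable_condExp
          ((integrable_const (1 : ℝ)).indicator (hm₂ _ hA)) (integral_condExp hm₁) hrect hG
    _ = ∫ x in A, G.indicator 1 x ∂μ := setIntegral_indicator_one_comm hGm (hm₂ _ hA)

end CondExp

section Immersion

variable {ι : Type*} {μ : Measure Ω} [IsFiniteMeasure μ]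

lemma condExp_indicator_ae_eq_iSup_of_forall_martingale [SemilatticeSup ι] {𝓕 𝓖 : Filtration ι m}
    (hH : ∀ M : ι → Ω → ℝ, Martingale M 𝓕 μ → Martingale M 𝓖 μ) {t : ι} {G : Set Ω}
    (hG : MeasurableSet[𝓖 t] G) :
    μ[G.indicator (1 : Ω → ℝ)|𝓕 t] =ᵐ[μ] μ[G.indicator 1|⨆ u, 𝓕 u] := by
  have hGm : MeasurableSet[m] G := 𝓖.le t _ hG
  have hle : ⨆ u, 𝓕 u ≤ m := iSup_le 𝓕.le
  have hpi : IsPiSystem {A : Set Ω | ∃ u, MeasurableSet[𝓕 u] A} := by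
    rw [Set.ofPred_exists]
    exact isPiSystem_iUnion_of_monotone _ (fun u => (𝓕 u).isPiSystem_measurableSet)
      fun _ _ => 𝓕.mono
  have hbasic : ∀ A ∈ {A : Set Ω | ∃ u, MeasurableSet[𝓕 u] A},
      ∫ x in A, μ[G.indicator (1 : Ω → ℝ)|𝓕 t] x ∂μ = ∫ x in A, G.indicator 1 x ∂μ := by
    rintro A ⟨u, hA⟩
    have hAm : MeasurableSet[m] A := 𝓕.le u _ hA
    have hA_int : Integrable (A.indicator (1 : Ω → ℝ)) μ := (integrable_const (1 : ℝ)).indicator hAm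
    -- the closed martingale `μ[1_A|𝓕 ·]` is a `𝓖`-martingale and equals `1_A` from time `u` on
    have hmart := (hH _ (martingale_condExp (A.indicator 1) 𝓕 μ)).condExp_ae_eq
      (le_sup_right : t ≤ u ⊔ t)
    rw [condExp_of_stronglyMeasurable (𝓕.le _)
      (stronglyMeasurable_one.indicator (𝓕.mono le_sup_left _ hA)) hA_int] at hmart
    calc ∫ x in A, μ[G.indicator 1|𝓕 t] x ∂μ = ∫ x in G, μ[A.indicator 1|𝓕 t] x ∂μ :=
          setIntegral_condExp_indicator_comm (𝓕.le t) hAm hGm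
      _ = ∫ x in G, μ[A.indicator 1|𝓖 t] x ∂μ :=
          setIntegral_congr_ae hGm (hmart.mono fun x hx _ => hx.symm)
      _ = ∫ x in G, A.indicator 1 x ∂μ := setIntegral_condExp (𝓖.le t) hA_int hG
      _ = ∫ x in A, G.indicator 1 x ∂μ := setIntegral_indicator_one_comm hGm hAm
  refine ae_eq_condExp_of_forall_setIntegral_eq hle ((integrable_const (1 : ℝ)).indicator hGm)
    (fun _ _ _ => integrable_condExp.integrableOn) (fun A hA _ => ?_)
    (stronglyMeasurable_condExp.mono (le_iSup _ t)).aestronglyMeasurable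
  exact setIntegral_eq_of_isPiSystem_s14 hle (MeasurableSpace.measurableSpace_iSup_eq 𝓕) hpi
    integrable_condExp ((integrable_const (1 : ℝ)).indicator hGm) (integral_condExp (𝓕.le t))
    hbasic hA

lemma martingale_of_condExp_indicator_ae_eq_iSup [Preorder ι] {𝓕 𝓖 : Filtration ι m}
    (h𝓕𝓖 : 𝓕 ≤ 𝓖)
    (hcond : ∀ t G, MeasurableSet[𝓖 t] G →
      μ[G.indicator (1 : Ω → ℝ)|𝓕 t] =ᵐ[μ] μ[G.indicator 1|⨆ u, 𝓕 u])
    {M : ι → Ω → ℝ} (hM : Martingale M 𝓕 μ) : Martingale M 𝓖 μ := by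
  refine ⟨fun i => (hM.stronglyAdapted i).mono (h𝓕𝓖 i), fun i j hij => ?_⟩
  refine ae_eq_condExp_of_forall_setIntegral_eq (𝓖.le i) (hM.integrable j)
    (fun _ _ _ => (hM.integrable i).integrableOn) (fun s hs _ => ?_)
    ((hM.stronglyAdapted i).mono (h𝓕𝓖 i)).aestronglyMeasurable |>.symm
  have hsm : MeasurableSet[m] s := 𝓖.le i _ hs
  have hle : ⨆ u, 𝓕 u ≤ m := iSup_le 𝓕.le
  have hMj : StronglyMeasurable[⨆ u, 𝓕 u] (M j) := (hM.stronglyAdapted j).mono (le_iSup _ j)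
  have hs_cond := hcond i s hs
  have hint : Integrable (μ[s.indicator 1|𝓕 i] * M j) μ :=
    (integrable_condExp_indicator_mul hMj (hM.integrable j) hsm).congr
      (hs_cond.symm.mul EventuallyEq.rfl)
  calc ∫ x in s, M i x ∂μ = ∫ x, μ[s.indicator 1|𝓕 i] x * M i x ∂μ :=
        setIntegral_eq_integral_condExp_indicator_mul (𝓕.le i) (hM.stronglyAdapted i)
          (hM.integrable i) hsm
    _ = ∫ x, μ[s.indicator 1|𝓕 i] x * μ[M j|𝓕 i] x ∂μ :=
        integral_congr_ae (EventuallyEq.rfl.mul (hM.condExp_ae_eq hij).symm)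
    _ = ∫ x, μ[s.indicator 1|𝓕 i] x * M j x ∂μ :=
        integral_mul_condExp (𝓕.le i) stronglyMeasurable_condExp hint (hM.integrable j)
    _ = ∫ x, μ[s.indicator 1|⨆ u, 𝓕 u] x * M j x ∂μ :=
        integral_congr_ae (hs_cond.mul EventuallyEq.rfl)
    _ = ∫ x in s, M j x ∂μ :=
        (setIntegral_eq_integral_condExp_indicator_mul hle hMj (hM.integrable j) hsm).symm

theorem forall_martingale_iff_condExp_indicator_ae_eq_iSup [SemilatticeSup ι]
    {𝓕 𝓖 : Filtration ι m} (h𝓕𝓖 : 𝓕 ≤ 𝓖) :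
    (∀ M : ι → Ω → ℝ, Martingale M 𝓕 μ → Martingale M 𝓖 μ) ↔
      ∀ t G, MeasurableSet[𝓖 t] G →
        μ[G.indicator (1 : Ω → ℝ)|𝓕 t] =ᵐ[μ] μ[G.indicator 1|⨆ u, 𝓕 u] :=
  ⟨fun hH _ _ hG => condExp_indicator_ae_eq_iSup_of_forall_martingale hH hG,
    fun hcond _ hM => martingale_of_condExp_indicator_ae_eq_iSup h𝓕𝓖 hcond hM⟩

end Immersion

lemma UsualConditions.measurableSet_of_forall_lt {μ : Measure Ω} {𝓕 : Filtration ℝ≥0 m}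
    (h𝓕 : UsualConditions 𝓕 μ) {t : ℝ≥0} {s : Set Ω} (hs : ∀ v, t < v → MeasurableSet[𝓕 v] s) :
    MeasurableSet[𝓕 t] s := by
  rw [h𝓕.2 t]
  simpa only [MeasurableSpace.measurableSet_iInf] using hs

lemma UsualConditions.aestronglyMeasurable_of_forall_lt {μ : Measure Ω} {𝓕 : Filtration ℝ≥0 m}
    (h𝓕 : UsualConditions 𝓕 μ) {t : ℝ≥0} {f : Ω → ℝ}
    (hf : ∀ v, t < v → AEStronglyMeasurable[𝓕 v] f μ) : AEStronglyMeasurable[𝓕 t] f μ := by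
  have hv : ∀ n : ℕ, t < t + 1 / (n + 1) := fun n => lt_add_of_pos_right t (by positivity)
  set g : ℕ → Ω → ℝ := fun n => (hf _ (hv n)).mk f
  have hfg : ∀ n, f =ᵐ[μ] g n := fun n => (hf _ (hv n)).ae_eq_mk
  -- off the null set `N`, all the versions `g n` agree; `N` is in `𝓕 0` by completeness
  set N : Set Ω := ⋃ n, {x | g n x ≠ g 0 x}
  have hN : μ N = 0 := measure_iUnion_null fun n => ae_iff.mp ((hfg n).symm.trans (hfg 0))
  have hgN : ∀ n, Nᶜ.indicator (g 0) = Nᶜ.indicator (g n) := fun n =>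
    indicator_congr fun x hx => by_contra fun h => hx (mem_iUnion.mpr ⟨n, Ne.symm h⟩)
  refine ⟨Nᶜ.indicator (g 0), Measurable.stronglyMeasurable fun s hs =>
    h𝓕.measurableSet_of_forall_lt fun v htv => ?_, ?_⟩
  · obtain ⟨n, hn⟩ := exists_nat_one_div_lt (tsub_pos_of_lt htv)
    rw [hgN n]
    exact 𝓕.mono (lt_tsub_iff_left.mp hn).le _ (((hf _ (hv n)).stronglyMeasurable_mk.indicator
      ((𝓕.mono zero_le _ (h𝓕.1 N hN)).compl)).measurable hs)
  · filter_upwards [hfg 0, measure_eq_zero_iff_ae_notMem.mp hN] with x hx hxN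
    rw [indicator_of_mem hxN, hx]

lemma isPiSystem_setOf_le (ρ : Ω → ℝ≥0∞) (v : ℝ≥0) :
    IsPiSystem {B | ∃ s ≤ v, {ω | ρ ω ≤ (s : ℝ≥0∞)} = B} := by
  rintro _ ⟨s, hs, rfl⟩ _ ⟨s', -, rfl⟩ -
  refine ⟨min s s', min_le_of_left_le hs, ?_⟩
  ext ω
  simp [ENNReal.coe_min]

lemma comap_min_le_generateFrom (ρ : Ω → ℝ≥0∞) (v : ℝ≥0) :
    MeasurableSpace.comap (fun ω => min (ρ ω) (v : ℝ≥0∞)) inferInstance ≤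
      MeasurableSpace.generateFrom {B | ∃ s ≤ v, {ω | ρ ω ≤ (s : ℝ≥0∞)} = B} := by
  refine Measurable.comap_le (measurable_of_Iic fun c => ?_)
  rcases le_or_gt (v : ℝ≥0∞) c with hvc | hcv
  · convert MeasurableSet.univ
    ext ω
    simp [hvc]
  · lift c to ℝ≥0 using hcv.ne_top
    refine MeasurableSpace.measurableSet_generateFrom ⟨c, (ENNReal.coe_lt_coe.mp hcv).le, ?_⟩
    ext ω
    simp [hcv.not_ge]

namespace ProgEnlargement

variable {𝓕 𝓖 : Filtration ℝ≥0 m} {ρ : Ω → ℝ≥0∞}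

lemma le (h𝓖 : ProgEnlargement 𝓕 ρ 𝓖) : 𝓕 ≤ 𝓖 := fun t => by
  rw [h𝓖 t]
  exact le_iInf₂ fun ε _ => (𝓕.mono le_self_add).trans le_sup_left

lemma le_sup_comap (h𝓖 : ProgEnlargement 𝓕 ρ 𝓖) {t v : ℝ≥0} (htv : t < v) :
    (𝓖 t : MeasurableSpace Ω) ≤
      𝓕 v ⊔ MeasurableSpace.comap (fun ω => min (ρ ω) (v : ℝ≥0∞)) inferInstance := by
  rw [h𝓖 t]
  refine (iInf₂_le (v - t) (tsub_pos_of_lt htv)).trans_eq ?_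
  rw [add_tsub_cancel_of_le htv.le]

lemma measurableSet_le (h𝓖 : ProgEnlargement 𝓕 ρ 𝓖) {s t : ℝ≥0} (hst : s ≤ t) :
    MeasurableSet[𝓖 t] {ω | ρ ω ≤ (s : ℝ≥0∞)} := by
  rw [h𝓖 t]
  simp only [MeasurableSpace.measurableSet_iInf]
  intro ε hε
  refine le_sup_right (a := (𝓕 (t + ε) : MeasurableSpace Ω)) _ ⟨Iic s, measurableSet_Iic, ?_⟩
  have hlt : (s : ℝ≥0∞) < (t + ε : ℝ≥0) :=
    ENNReal.coe_lt_coe.mpr (hst.trans_lt (lt_add_of_pos_right t hε))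
  ext ω
  simp only [mem_preimage, mem_Iic, mem_ofPred_eq, min_le_iff, hlt.not_ge, or_false]

lemma condExp_indicator_ae_eq_iSup {μ : Measure Ω} [IsFiniteMeasure μ]
    (h𝓖 : ProgEnlargement 𝓕 ρ 𝓖) (h𝓕 : UsualConditions 𝓕 μ) (hρ : Measurable ρ)
    (hlaw : ∀ s t : ℝ≥0, s ≤ t →
      μ[{ω | ρ ω ≤ (s : ℝ≥0∞)}.indicator (1 : Ω → ℝ)|𝓕 t] =ᵐ[μ]
        μ[{ω | ρ ω ≤ (s : ℝ≥0∞)}.indicator 1|⨆ u, 𝓕 u])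
    {t : ℝ≥0} {G : Set Ω} (hG : MeasurableSet[𝓖 t] G) :
    μ[G.indicator (1 : Ω → ℝ)|𝓕 t] =ᵐ[μ] μ[G.indicator 1|⨆ u, 𝓕 u] := by
  have hle : ⨆ u, 𝓕 u ≤ m := iSup_le 𝓕.le
  have hlater : ∀ v, t < v →
      μ[G.indicator (1 : Ω → ℝ)|𝓕 v] =ᵐ[μ] μ[G.indicator 1|⨆ u, 𝓕 u] := by
    intro v htv
    refine condExp_indicator_ae_eq_of_isPiSystem (le_iSup _ v) hle (isPiSystem_setOf_le ρ v)
      ?_ ?_ ?_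
    · rintro _ ⟨s, -, rfl⟩
      exact hρ measurableSet_Iic
    · rintro _ ⟨s, hs, rfl⟩
      exact hlaw s v hs
    · exact sup_le_sup_left (comap_min_le_generateFrom ρ v) _ _ (h𝓖.le_sup_comap htv _ hG)
  have hmeas : AEStronglyMeasurable[𝓕 t] (μ[G.indicator (1 : Ω → ℝ)|⨆ u, 𝓕 u]) μ :=
    h𝓕.aestronglyMeasurable_of_forall_lt fun v htv =>
      stronglyMeasurable_condExp.aestronglyMeasurable.congr (hlater v htv)
  calc μ[G.indicator 1|𝓕 t] =ᵐ[μ] μ[μ[G.indicator 1|⨆ u, 𝓕 u]|𝓕 t] :=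
        (condExp_condExp_of_le (le_iSup _ t) hle).symm
    _ =ᵐ[μ] μ[G.indicator 1|⨆ u, 𝓕 u] :=
        condExp_of_aestronglyMeasurable' (𝓕.le t) hmeas integrable_condExp

end ProgEnlargement

/-- **(H) for progressive enlargements via the conditional law of `ρ`.** Every
`𝓕`-martingale is an `𝓕^ρ`-martingale iff for all `s ≤ t`,
`P(ρ ≤ s | 𝓕 t) = P(ρ ≤ s | 𝓕_∞)` a.s. -/
theorem H_progressive_iff_cond_law {μ : Measure Ω} [IsProbabilityMeasure μ]
    (𝓕 : Filtration ℝ≥0 m) (h𝓕 : UsualConditions 𝓕 μ)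
    (ρ : Ω → ℝ≥0∞) (hρ : Measurable ρ)
    (𝓖 : Filtration ℝ≥0 m) (h𝓖 : ProgEnlargement 𝓕 ρ 𝓖) :
    (∀ M : ℝ≥0 → Ω → ℝ, Martingale M 𝓕 μ → Martingale M 𝓖 μ) ↔
      (∀ s t : ℝ≥0, s ≤ t →
        μ[Set.indicator {ω | ρ ω ≤ (s : ℝ≥0∞)} (fun _ => (1 : ℝ)) | 𝓕 t] =ᵐ[μ]
        μ[Set.indicator {ω | ρ ω ≤ (s : ℝ≥0∞)} (fun _ => (1 : ℝ)) |
            (⨆ u : ℝ≥0, (𝓕 u : MeasurableSpace Ω))]) := by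
  rw [forall_martingale_iff_condExp_indicator_ae_eq_iSup h𝓖.le]
  exact ⟨fun hcond s t hst => hcond t _ (h𝓖.measurableSet_le hst),
    fun hlaw _ _ hG => h𝓖.condExp_indicator_ae_eq_iSup h𝓕 hρ hlaw hG⟩

end Enlargement
end
end
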